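/- arXiv:0803.2212 — 5 statements merged into one kernel-verified Lean document; each statement's English description precedes it below -/
import Mathlib

section
/- For ws-sets S1 and S2, the world-set represented by Intersect(S1, S2) := { d1 ∪ d2 | d1 ∈ S1, d2 ∈ S2, d1 consistent with d2 } equals ω(S1) ∩ ω(S2). -/
def WSExtends {V α : Type} (Dom : V → Finset α) (f : V → α) (d : V → Option α) : Prop :=
  (∀ x, f x ∈ Dom x) ∧ ∀ x a, d x = some a → f x = a

def omegaD {V α : Type} (Dom : V → Finset α) (d : V → Option α) : Set (V → α) :=
  {f | WSExtends Dom f d}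

/-- ω(S) for a finite ws-set `S`. -/
def omegaS {V α : Type} (Dom : V → Finset α) (S : Finset (V → Option α)) : Set (V → α) :=
  ⋃ d ∈ S, omegaD Dom d

/-- Intersect(S1,S2): pairwise unions of consistent descriptors. -/
def IntersectWS {V α : Type} (S1 S2 : Finset (V → Option α)) : Set (V → Option α) :=
  { e | ∃ d1 ∈ S1, ∃ d2 ∈ S2,
      (∀ x a b, d1 x = some a → d2 x = some b → a = b) ∧
      e = fun x => (d1 x).orElse (fun _ => d2 x) }

theorem stmt5 {V α : Type} (Dom : V → Finset α)
    (S1 S2 : Finset (V → Option α)) :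
    (⋃ e ∈ IntersectWS S1 S2, omegaD Dom e) = omegaS Dom S1 ∩ omegaS Dom S2 := by
  ext f
  simp only [Set.mem_iUnion, Set.mem_inter_iff, omegaS, omegaD, WSExtends,
    IntersectWS, Set.mem_setOf_eq]
  constructor
  · rintro ⟨e, ⟨d1, h1, d2, h2, hc, rfl⟩, hdom, hext⟩
    refine ⟨⟨d1, h1, hdom, ?_⟩, ⟨d2, h2, hdom, ?_⟩⟩
    · intro x a hx; exact hext x a (by simp [hx])
    · intro x a hx
      cases hd1 : d1 x with
      | none => exact hext x a (by simp [hd1, hx])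
      | some b => rw [hext x b (by simp [hd1]), hc x b a hd1 hx]
  · rintro ⟨⟨d1, h1, hdom, he1⟩, ⟨d2, h2, _, he2⟩⟩
    refine ⟨fun x => (d1 x).orElse (fun _ => d2 x), ⟨d1, h1, d2, h2, ?_, rfl⟩, hdom, ?_⟩
    · intro x a b ha hb; rw [← he1 x a ha, ← he2 x b hb]
    · intro x a hx
      cases hd1 : d1 x with
      | none => simp [hd1] at hx; exact he2 x a hx
      | some b => simp [hd1] at hx; exact hx ▸ he1 x b hd1
end

section
/- For consistent ws-descriptors d1 and d2, define Diff({d1},{d2}) as the set of descriptors d1 ∪ {x1↦w1,…,x_{i−1}↦w_{i−1}, x_i↦w'_i} where d2 − d1 = {x1↦w1,…,x_k↦w_k} (enumerated in some fixed order), 1 ≤ i ≤ k, and w'_i ∈ Dom_{x_i} with w'_i ≠ w_i; if d1 and d2 are inconsistent, Diff({d1},{d2}) := {d1}. Then ω(Diff({d1},{d2})) = ω(d1) \ ω(d2). -/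
/-- Diff({d1},{d2}) for consistent `d1`, `d2`, relative to a fixed enumeration
`xs` of the variables assigned by `d2` but not by `d1`: the descriptors extending
`d1` by the `d2`-assignments on `x1,…,x_{i-1}` and a differing value on `x_i`. -/
def DiffSet {V α : Type} [DecidableEq V] [DecidableEq α]
    (Dom : V → Finset α) (d1 d2 : V → Option α) (xs : List V) : Set (V → Option α) :=
  { e | ∃ i : Fin xs.length, ∃ w' ∈ Dom (xs.get i),
      d2 (xs.get i) ≠ some w' ∧
      e = fun y => if y = xs.get i then some w'
            else if y ∈ xs.take i.val then d2 y else d1 y }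

section

variable {V α : Type} (Dom : V → Finset α)

theorem omegaD_subset_of_le {d e : V → Option α} (hde : ∀ x a, d x = some a → e x = some a) :
    omegaD Dom e ⊆ omegaD Dom d :=
  fun _ ⟨hdom, he⟩ => ⟨hdom, fun x a hx => he x a (hde x a hx)⟩

theorem notMem_omegaD {d : V → Option α} {f : V → α} {x : V} {a : α} (hx : d x = some a)
    (hfx : f x ≠ a) : f ∉ omegaD Dom d :=
  fun ⟨_, hf⟩ => hfx (hf x a hx)

theorem exists_ne_of_mem_omegaD_of_notMem_omegaD {d1 d2 : V → Option α} {f : V → α}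
    (hcons : ∀ x a b, d1 x = some a → d2 x = some b → a = b)
    (hf1 : f ∈ omegaD Dom d1) (hf2 : f ∉ omegaD Dom d2) :
    ∃ x b, d1 x = none ∧ d2 x = some b ∧ f x ≠ b := by
  obtain ⟨x, b, hb, hfb⟩ : ∃ x b, d2 x = some b ∧ f x ≠ b := by
    by_contra! h
    exact hf2 ⟨hf1.1, h⟩
  refine ⟨x, b, ?_, hb, hfb⟩
  cases hx : d1 x with
  | none => rfl
  | some c => exact absurd (hcons x c b hx hb ▸ hf1.2 x c hx) hfb

end

section

variable {V α : Type} [DecidableEq V] (Dom : V → Finset α)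

def diffDescriptor (d1 d2 : V → Option α) (xs : List V) (i : Fin xs.length) (w' : α) :
    V → Option α :=
  fun y => if y = xs.get i then some w' else if y ∈ xs.take i.val then d2 y else d1 y

theorem diffDescriptor_get (d1 d2 : V → Option α) (xs : List V) (i : Fin xs.length) (w' : α) :
    diffDescriptor d1 d2 xs i w' (xs.get i) = some w' := by
  simp [diffDescriptor]

theorem le_diffDescriptor {d1 d2 : V → Option α} {xs : List V} (hxs : ∀ y ∈ xs, d1 y = none)
    (i : Fin xs.length) (w' : α) (x : V) (a : α) (hx : d1 x = some a) :
    diffDescriptor d1 d2 xs i w' x = some a := by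
  have hx_notMem : x ∉ xs := fun hmem => by simp [hxs x hmem] at hx
  have hx_ne : x ≠ xs.get i := fun h => hx_notMem (h ▸ List.get_mem xs i)
  have hx_notTake : x ∉ xs.take i.val := fun h => hx_notMem (List.take_subset _ _ h)
  simp only [diffDescriptor, if_neg hx_ne, if_neg hx_notTake, hx]

theorem mem_omegaD_diffDescriptor {d1 d2 : V → Option α} {xs : List V} {f : V → α}
    (hf : f ∈ omegaD Dom d1) (i : Fin xs.length)
    (hagree : ∀ j : Fin xs.length, j < i → d2 (xs.get j) = some (f (xs.get j))) :
    f ∈ omegaD Dom (diffDescriptor d1 d2 xs i (f (xs.get i))) := by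
  refine ⟨hf.1, fun y a hy => ?_⟩
  unfold diffDescriptor at hy
  split_ifs at hy with hyi hyTake
  · exact hyi ▸ Option.some_inj.1 hy
  · obtain ⟨m, hm, rfl⟩ := List.mem_take_iff_getElem.1 hyTake
    have hagree_m := hagree ⟨m, lt_of_lt_of_le hm (min_le_right _ _)⟩
      (show m < i.val from lt_of_lt_of_le hm (min_le_left _ _))
    rw [List.get_eq_getElem] at hagree_m
    exact Option.some_inj.1 (hagree_m.symm.trans hy)
  · exact hf.2 y a hy

theorem biUnion_omegaD_diffSet_subset [DecidableEq α] {d1 d2 : V → Option α} {xs : List V}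
    (hxs : ∀ y ∈ xs, d1 y = none ∧ d2 y ≠ none) :
    (⋃ e ∈ DiffSet Dom d1 d2 xs, omegaD Dom e) ⊆ omegaD Dom d1 \ omegaD Dom d2 := by
  simp only [Set.iUnion_subset_iff]
  rintro _ ⟨i, w', -, hne, rfl⟩ f hf
  obtain ⟨b, hb⟩ := Option.ne_none_iff_exists'.1 (hxs _ (List.get_mem xs i)).2
  have hfi : f (xs.get i) = w' := hf.2 _ _ (diffDescriptor_get d1 d2 xs i w')
  refine ⟨omegaD_subset_of_le Dom (le_diffDescriptor (fun y hy => (hxs y hy).1) i w') hf,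
    notMem_omegaD Dom hb ?_⟩
  rintro rfl
  exact hne (hfi ▸ hb)

theorem diff_subset_biUnion_omegaD_diffSet [DecidableEq α] {d1 d2 : V → Option α} {xs : List V}
    (hcons : ∀ x a b, d1 x = some a → d2 x = some b → a = b)
    (hxs : ∀ y, d1 y = none → d2 y ≠ none → y ∈ xs) :
    omegaD Dom d1 \ omegaD Dom d2 ⊆ ⋃ e ∈ DiffSet Dom d1 d2 xs, omegaD Dom e := by
  rintro f ⟨hf1, hf2⟩
  obtain ⟨x, b, hx1, hx2, hfx⟩ := exists_ne_of_mem_omegaD_of_notMem_omegaD Dom hcons hf1 hf2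
  obtain ⟨j, rfl⟩ := List.mem_iff_get.1 (hxs x hx1 (by simp [hx2]))
  obtain ⟨i, hi, hmin⟩ := wellFounded_lt.has_min {i | d2 (xs.get i) ≠ some (f (xs.get i))}
    ⟨j, fun h => hfx (Option.some_inj.1 (hx2.symm.trans h)).symm⟩
  exact Set.mem_biUnion ⟨i, f (xs.get i), hf1.1 _, hi, rfl⟩
    (mem_omegaD_diffDescriptor Dom hf1 i fun j hj => not_not.1 fun h => hmin j h hj)

end

theorem stmt6_general {V α : Type} [DecidableEq V] [DecidableEq α]
    (Dom : V → Finset α)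
    (d1 d2 : V → Option α)
    (hcons : ∀ x a b, d1 x = some a → d2 x = some b → a = b)
    (xs : List V)
    (hxs : ∀ y, y ∈ xs ↔ (d1 y = none ∧ d2 y ≠ none)) :
    (⋃ e ∈ DiffSet Dom d1 d2 xs, omegaD Dom e) = omegaD Dom d1 \ omegaD Dom d2 :=
  (biUnion_omegaD_diffSet_subset Dom fun y => (hxs y).1).antisymm
    (diff_subset_biUnion_omegaD_diffSet Dom hcons fun y h1 h2 => (hxs y).2 ⟨h1, h2⟩)

theorem stmt6 {V α : Type} [DecidableEq V] [DecidableEq α]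
    (Dom : V → Finset α)
    (d1 d2 : V → Option α)
    (hv1 : ∀ x a, d1 x = some a → a ∈ Dom x)
    (hv2 : ∀ x a, d2 x = some a → a ∈ Dom x)
    (hcons : ∀ x a b, d1 x = some a → d2 x = some b → a = b)
    (xs : List V) (hnd : xs.Nodup)
    (hxs : ∀ y, y ∈ xs ↔ (d1 y = none ∧ d2 y ≠ none)) :
    (⋃ e ∈ DiffSet Dom d1 d2 xs, omegaD Dom e) = omegaD Dom d1 \ omegaD Dom d2 :=
  stmt6_general Dom d1 d2 hcons xs hxs
end

section
/- Define ws-trees over a world-table inductively: a leaf ∅ represents the set of all worlds; a leaf ⊥ represents the empty world-set; an ⊕-node for variable x with children (i, R_i) for i ranging over a subset I ⊆ Dom_x represents ⋃_{i∈I} (A_{x=i} ∩ ω(R_i)), where no R_i mentions x; an ⊗-node with children R_1,…,R_k whose variable sets are pairwise disjoint represents ⋃_j ω(R_j). Define P(∅)=1, P(⊥)=0, P(⊗(R_1,…,R_k)) = 1 − ∏_j (1 − P(R_j)), and P(⊕_{i∈I}(x↦i : R_i)) = Σ_{i∈I} P_x(i)·P(R_i). Then for every ws-tree R, P(R) equals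 the probability under the product measure of the world-set ω(R) represented by R. -/
/-- World-set trees: leaves `top` (all worlds) and `bot` (no worlds),
⊕-nodes with one child per assignment `x ↦ i` for `i ∈ I`, and
⊗-nodes with finitely many children. -/
inductive WSTree (V α : Type) where
  | top : WSTree V α
  | bot : WSTree V α
  | oplus (x : V) (I : Finset α) (c : α → WSTree V α) : WSTree V α
  | otimes (n : ℕ) (c : Fin n → WSTree V α) : WSTree V α

/-- The world-set represented by a ws-tree. -/
def WSTree.omega {V α : Type} : WSTree V α → Set (V → α)
  | .top => Set.univ
  | .bot => ∅
  | .oplus x I c => ⋃ i ∈ I, ({f : V → α | f x = i} ∩ (c i).omega)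
  | .otimes _ c => ⋃ j, (c j).omega

/-- The variables mentioned by a ws-tree. -/
def WSTree.vars {V α : Type} : WSTree V α → Set V
  | .top => ∅
  | .bot => ∅
  | .oplus x I c => {x} ∪ ⋃ i ∈ I, (c i).vars
  | .otimes _ c => ⋃ j, (c j).vars

/-- The probability computation `P` on ws-trees. -/
noncomputable def WSTree.prob {V α : Type} [Fintype α] (p : V → α → ℝ) :
    WSTree V α → ℝ
  | .top => 1
  | .bot => 0
  | .oplus x I c => ∑ i ∈ I, p x i * (c i).prob p
  | .otimes _ c => 1 - ∏ j, (1 - (c j).prob p)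

/-- Structural constraints on ws-trees: children of an ⊕-node on `x` do not
mention `x`, and the children of an ⊗-node use pairwise disjoint variables. -/
inductive WSTree.WF {V α : Type} : WSTree V α → Prop
  | top : WF .top
  | bot : WF .bot
  | oplus (x : V) (I : Finset α) (c : α → WSTree V α) :
      (∀ i ∈ I, WF (c i)) → (∀ i ∈ I, x ∉ (c i).vars) → WF (.oplus x I c)
  | otimes (n : ℕ) (c : Fin n → WSTree V α) :
      (∀ j, WF (c j)) → (∀ j k, j ≠ k → Disjoint (c j).vars (c k).vars) →
      WF (.otimes n c)

open Classical in
noncomputable def Pr {V α : Type} [Fintype V] [DecidableEq V] [Fintype α]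
    (p : V → α → ℝ) (S : Set (V → α)) : ℝ :=
  ∑ f ∈ Finset.univ.filter (fun f => f ∈ S), ∏ x, p x (f x)

/-! By induction on the tree. `Pr` is the product measure of the weights `p x`, so events
depending on disjoint sets of variables are independent. At an ⊕-node on `x` the events
`x = i` are disjoint and each is independent of the world-set of its child, which does not
mention `x`; at an ⊗-node the complements of the children's world-sets are independent, which
gives `1 - ∏ (1 - P(R_j))` for their union. -/

section Pr

open Function

variable {V α : Type} [Fintype V] [DecidableEq V] [Fintype α] (p : V → α → ℝ)

theorem Pr_eq_sum_indicator (S : Set (V → α)) :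
    Pr p S = ∑ f, S.indicator (fun f => ∏ x, p x (f x)) f := by
  classical
  simp only [Pr, Finset.sum_filter, Set.indicator_apply]

theorem Pr_setOf_forall_mem (t : V → Finset α) :
    Pr p {f | ∀ x, f x ∈ t x} = ∏ x, ∑ a ∈ t x, p x a := by
  rw [Finset.prod_univ_sum, Pr]
  congr 1
  ext f
  simp [Fintype.mem_piFinset]

variable {p}

theorem Pr_univ (hp1 : ∀ x, ∑ a, p x a = 1) : Pr p (Set.univ : Set (V → α)) = 1 := by
  simpa [hp1] using Pr_setOf_forall_mem p fun _ => Finset.univ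

theorem Pr_setOf_apply_eq (hp1 : ∀ x, ∑ a, p x a = 1) (x : V) (i : α) :
    Pr p {f : V → α | f x = i} = p x i := by
  let t := update (fun _ => Finset.univ) x {i}
  have hset : {f : V → α | f x = i} = {f | ∀ y, f y ∈ t y} := by
    ext f
    simp only [Set.mem_ofPred_eq, t, update_apply]
    refine ⟨fun hf y => ?_, fun hf => by simpa using hf x⟩
    split_ifs with hy <;> simp [hy, hf]
  rw [hset, Pr_setOf_forall_mem, Finset.prod_eq_single x (fun y _ hy => by simp [t, hy, hp1])
    (by simp)]
  simp [t]

theorem Pr_compl (hp1 : ∀ x, ∑ a, p x a = 1) (S : Set (V → α)) : Pr p Sᶜ = 1 - Pr p S := by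
  classical
  rw [← Pr_univ hp1, eq_sub_iff_add_eq', Pr_eq_sum_indicator, Pr_eq_sum_indicator,
    Pr_eq_sum_indicator, ← Finset.sum_add_distrib]
  simp_rw [Set.indicator_self_add_compl_apply, Set.indicator_univ]

theorem Pr_biUnion_of_pairwiseDisjoint {ι : Type} (I : Finset ι) {U : ι → Set (V → α)}
    (hU : (I : Set ι).PairwiseDisjoint U) :
    Pr p (⋃ i ∈ I, U i) = ∑ i ∈ I, Pr p (U i) := by
  classical
  simp only [Pr]
  rw [← Finset.sum_biUnion]
  · congr 1
    ext f
    simp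
  · intro i hi j hj hij
    simpa [onFun, Finset.disjoint_filter] using
      fun f hfi hfj => Set.disjoint_left.1 (hU hi hj hij) hfi hfj

theorem Pr_inter_of_dependsOn_compl (hp1 : ∀ x, ∑ a, p x a = 1) (A : Set V) {S T : Set (V → α)}
    (hS : DependsOn (· ∈ S) A) (hT : DependsOn (· ∈ T) Aᶜ) :
    Pr p (S ∩ T) = Pr p S * Pr p T := by
  classical
  let w (f : V → α) := ∏ x, p x (f x)
  -- `σ` exchanges the `A`-coordinates of two worlds: it preserves their joint weight, and
  -- `σ (f, g) ∈ S ×ˢ T` iff `f ∈ S ∩ T`.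
  let σ (q : (V → α) × (V → α)) := (A.piecewise q.1 q.2, A.piecewise q.2 q.1)
  have hσ : σ.Involutive := fun q => by
    ext x <;> by_cases hx : x ∈ A <;> simp [σ, Set.piecewise, hx]
  have hw (f g : V → α) : w (A.piecewise f g) * w (A.piecewise g f) = w f * w g := by
    simp only [w, ← Finset.prod_mul_distrib]
    exact Finset.prod_congr rfl fun x _ => by by_cases hx : x ∈ A <;> simp [hx, mul_comm]
  have hS' (f g : V → α) : (A.piecewise f g ∈ S) = (f ∈ S) :=
    hS fun x hx => Set.piecewise_eq_of_mem _ _ _ hx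
  have hT' (f g : V → α) : (A.piecewise g f ∈ T) = (f ∈ T) :=
    hT fun x hx => Set.piecewise_eq_of_notMem _ _ _ hx
  calc Pr p (S ∩ T)
      = ∑ q : (V → α) × (V → α), (S ∩ T).indicator w q.1 * w q.2 := by
        have hw1 : ∑ f, w f = 1 := by simpa [Pr_eq_sum_indicator] using Pr_univ hp1
        simp only [Fintype.sum_prod_type]
        rw [← Finset.sum_mul_sum, hw1, mul_one, Pr_eq_sum_indicator]
    _ = ∑ q : (V → α) × (V → α),
          S.indicator w (σ q).1 * T.indicator w (σ q).2 := by
        refine Finset.sum_congr rfl fun q _ => ?_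
        simp only [σ, Set.indicator_apply, hS', hT', Set.mem_inter_iff]
        split_ifs <;> simp_all
    _ = ∑ q : (V → α) × (V → α),
          S.indicator w q.1 * T.indicator w q.2 :=
        Equiv.sum_comp (hσ.toPerm σ) fun q =>
          S.indicator w q.1 * T.indicator w q.2
    _ = Pr p S * Pr p T := by
        simp only [Fintype.sum_prod_type]
        rw [← Finset.sum_mul_sum, Pr_eq_sum_indicator, Pr_eq_sum_indicator]

theorem Pr_biInter_of_dependsOn (hp1 : ∀ x, ∑ a, p x a = 1) {ι : Type} (J : Finset ι)
    {T : ι → Set (V → α)} {W : ι → Set V}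
    (hT : ∀ j, DependsOn (· ∈ T j) (W j)) (hW : Pairwise (Disjoint on W)) :
    Pr p (⋂ j ∈ J, T j) = ∏ j ∈ J, Pr p (T j) := by
  classical
  induction J using Finset.induction_on with
  | empty => simp [Pr_univ hp1]
  | insert a J ha ih =>
    have hrest : DependsOn (· ∈ ⋂ j ∈ J, T j) (W a)ᶜ := fun f g hfg => by
      simp only [Set.mem_iInter, eq_iff_iff]
      refine forall₂_congr fun j hj => eq_iff_iff.1 (hT j fun x hx => hfg x ?_)
      exact Set.disjoint_right.1 (hW (ne_of_mem_of_not_mem hj ha).symm) hx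
    rw [Finset.set_biInter_insert, Pr_inter_of_dependsOn_compl hp1 (W a) (hT a) hrest, ih,
      Finset.prod_insert ha]

theorem Pr_iUnion_of_dependsOn (hp1 : ∀ x, ∑ a, p x a = 1)
    {ι : Type} [Fintype ι] {S : ι → Set (V → α)}
    {W : ι → Set V} (hS : ∀ j, DependsOn (· ∈ S j) (W j)) (hW : Pairwise (Disjoint on W)) :
    Pr p (⋃ j, S j) = 1 - ∏ j, (1 - Pr p (S j)) := by
  have hSc (j : ι) : DependsOn (· ∈ (S j)ᶜ) (W j) := fun f g hfg => by
    simp only [Set.mem_compl_iff, hS j hfg]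
  rw [← compl_compl (⋃ j, S j), Pr_compl hp1, Set.compl_iUnion]
  simpa [Pr_compl hp1] using Pr_biInter_of_dependsOn hp1 Finset.univ hSc hW

end Pr

theorem WSTree.dependsOn_mem_omega {V α : Type} (R : WSTree V α) :
    DependsOn (· ∈ R.omega) R.vars := by
  induction R with
  | top => exact fun _ _ _ => rfl
  | bot => exact fun _ _ _ => rfl
  | oplus x I c ih =>
    intro f g hfg
    simp only [WSTree.vars, Set.mem_union, Set.mem_singleton_iff, Set.mem_iUnion] at hfg
    simp only [WSTree.omega, Set.mem_iUnion, Set.mem_inter_iff, Set.mem_ofPred_eq,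
      hfg x (Or.inl rfl), eq_iff_iff]
    exact exists₂_congr fun i hi =>
      and_congr_right' (eq_iff_iff.1 (ih i fun y hy => hfg y (Or.inr ⟨i, hi, hy⟩)))
  | otimes n c ih =>
    intro f g hfg
    simp only [WSTree.vars, Set.mem_iUnion] at hfg
    simp only [WSTree.omega, Set.mem_iUnion, eq_iff_iff]
    exact exists_congr fun j => eq_iff_iff.1 (ih j fun y hy => hfg y ⟨j, hy⟩)

theorem stmt11_general {V α : Type} [Fintype V] [DecidableEq V] [Fintype α]
    (p : V → α → ℝ) (hp1 : ∀ x, ∑ a, p x a = 1)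
    (R : WSTree V α) (hR : R.WF) :
    R.prob p = Pr p R.omega := by
  induction hR with
  | top => rw [WSTree.prob, WSTree.omega, Pr_univ hp1]
  | bot => rw [WSTree.prob, WSTree.omega, Pr_eq_sum_indicator]; simp
  | oplus x I c _ hx ih =>
    have hdisj : (I : Set α).PairwiseDisjoint fun i => {f : V → α | f x = i} ∩ (c i).omega :=
      fun i _ j _ hij => Set.disjoint_left.2 fun f hfi hfj => hij (hfi.1.symm.trans hfj.1)
    rw [WSTree.prob, WSTree.omega, Pr_biUnion_of_pairwiseDisjoint I hdisj]
    refine Finset.sum_congr rfl fun i hi => ?_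
    have hxi : DependsOn (· ∈ {f : V → α | f x = i}) {x} := fun f g hfg => by
      simp [hfg x rfl]
    have hci : DependsOn (· ∈ (c i).omega) {x}ᶜ :=
      (c i).dependsOn_mem_omega.mono fun y hy (hyx : y = x) => hx i hi (hyx ▸ hy)
    rw [Pr_inter_of_dependsOn_compl hp1 {x} hxi hci, Pr_setOf_apply_eq hp1, ih i hi]
  | otimes n c _ hdisj ih =>
    rw [WSTree.prob, WSTree.omega,
      Pr_iUnion_of_dependsOn hp1 (fun j => (c j).dependsOn_mem_omega) fun j k => hdisj j k]
    simp only [ih]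

/-- `P(R)` equals the probability of the world-set represented by `R`. -/
theorem stmt11 {V α : Type} [Fintype V] [DecidableEq V] [Fintype α]
    (p : V → α → ℝ) (hp0 : ∀ x a, 0 ≤ p x a) (hp1 : ∀ x, ∑ a, p x a = 1)
    (R : WSTree V α) (hR : R.WF) :
    R.prob p = Pr p R.omega :=
  stmt11_general p hp1 R hR
end

section
/- Soundness of variable elimination: let S be a finite ws-set, x a variable, T := { d ∈ S : x not in domain of d }, and for each i ∈ Dom_x let S_{x↦i} := { d restricted to variables other than x : d ∈ S, d(x) = i }. Then ω(S) = ⋃_{i∈Dom_x} ( A_{x=i} ∩ ω(S_{x↦i} ∪ T) ), and the sets A_{x=i} ∩ ω(S_{x↦i} ∪ T) are pairwise disjoint for distinct i. -/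
/-- `S_{x↦i} ∪ T`: the descriptors of `S` assigning `i` to `x`, restricted away
from `x`, together with the descriptors of `S` not assigning `x`. -/
def elimSet {V α : Type} [Fintype V] [DecidableEq V] [DecidableEq α]
    (S : Finset (V → Option α)) (x : V) (i : α) : Finset (V → Option α) :=
  (S.filter (fun d => d x = some i)).image
      (fun d => fun y => if y = x then none else d y)
    ∪ S.filter (fun d => d x = none)

/-- Soundness of variable elimination. -/
theorem stmt12 {V α : Type} [Fintype V] [DecidableEq V] [DecidableEq α]
    (Dom : V → Finset α)
    (S : Finset (V → Option α))
    (hvalid : ∀ d ∈ S, ∀ y a, d y = some a → a ∈ Dom y)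
    (x : V) :
    (omegaS Dom S =
      ⋃ i ∈ Dom x, ({f : V → α | f x = i} ∩ omegaS Dom (elimSet S x i))) ∧
    (∀ i ∈ Dom x, ∀ j ∈ Dom x, i ≠ j →
      ({f : V → α | f x = i} ∩ omegaS Dom (elimSet S x i)) ∩
        ({f : V → α | f x = j} ∩ omegaS Dom (elimSet S x j)) = ∅) := by
  constructor
  · ext f
    simp only [Set.mem_iUnion, Set.mem_inter_iff, Set.mem_setOf_eq, omegaS, omegaD,
      WSExtends, Set.mem_setOf_eq]
    constructor
    · rintro ⟨d, hd, hf, hext⟩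
      refine ⟨f x, hf x, rfl, ?_⟩
      rcases h : d x with _ | a
      · exact ⟨d, by simp [elimSet, Finset.mem_union, Finset.mem_filter, hd, h], hf, hext⟩
      · have hfx : f x = a := hext x a h
        refine ⟨fun y => if y = x then none else d y, ?_, hf, ?_⟩
        · simp only [elimSet, Finset.mem_union, Finset.mem_image, Finset.mem_filter]
          exact Or.inl ⟨d, ⟨hd, by rw [h, hfx]⟩, rfl⟩
        · intro y b hy
          by_cases hyx : y = x
          · simp [hyx] at hy
          · simp [hyx] at hy; exact hext y b hy
    · rintro ⟨i, hi, hfx, d', hd', hf, hext⟩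
      simp only [elimSet, Finset.mem_union, Finset.mem_image, Finset.mem_filter] at hd'
      rcases hd' with ⟨d, ⟨hd, hdx⟩, rfl⟩ | ⟨hd, hdx⟩
      · refine ⟨d, hd, hf, fun y b hy => ?_⟩
        by_cases hyx : y = x
        · subst hyx; rw [hdx] at hy; cases hy; exact hfx
        · exact hext y b (by simp [hyx, hy])
      · exact ⟨d', hd, hf, hext⟩
  · intro i _ j _ hij
    ext f
    simp only [Set.mem_inter_iff, Set.mem_setOf_eq, Set.mem_empty_iff_false, iff_false]
    rintro ⟨⟨h1, -⟩, ⟨h2, -⟩⟩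
    exact hij (h1 ▸ h2)
end

section
/- Sharpness of mutex detection for ws-sets: two finite ws-sets S1 and S2 satisfy ω(S1) ∩ ω(S2) = ∅ if for all d1 ∈ S1 and d2 ∈ S2 the descriptors d1 and d2 are inconsistent; conversely, if some d1 ∈ S1 is consistent with some d2 ∈ S2, then ω(S1) ∩ ω(S2) ≠ ∅. -/
/-- Two ws-sets are mutex iff all pairs of their descriptors are inconsistent. -/
theorem stmt19 {V α : Type} (Dom : V → Finset α)
    (hne : ∀ x, (Dom x).Nonempty)
    (S1 S2 : Finset (V → Option α))
    (hv1 : ∀ d ∈ S1, ∀ x a, d x = some a → a ∈ Dom x)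
    (hv2 : ∀ d ∈ S2, ∀ x a, d x = some a → a ∈ Dom x) :
    omegaS Dom S1 ∩ omegaS Dom S2 = ∅ ↔
      ∀ d1 ∈ S1, ∀ d2 ∈ S2, ∃ x a b, d1 x = some a ∧ d2 x = some b ∧ a ≠ b := by
  constructor
  · intro h d1 h1 d2 h2
    by_contra hc
    push_neg at hc
    -- build a common extension
    classical
    set f : V → α := fun x =>
      match d1 x with
      | some a => a
      | none => match d2 x with
        | some a => a
        | none => (hne x).choose with hf
    have hfDom : ∀ x, f x ∈ Dom x := by
      intro x
      simp only [hf]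
      cases e1 : d1 x with
      | some a => exact hv1 d1 h1 x a e1
      | none =>
        cases e2 : d2 x with
        | some a => exact hv2 d2 h2 x a e2
        | none => exact (hne x).choose_spec
    have hf1 : ∀ x a, d1 x = some a → f x = a := by
      intro x a e; simp [hf, e]
    have hf2 : ∀ x a, d2 x = some a → f x = a := by
      intro x a e
      cases e1 : d1 x with
      | some b =>
        have := hc x b a e1 e
        simp [hf, e1, this]
      | none => simp [hf, e1, e]
    have : f ∈ omegaS Dom S1 ∩ omegaS Dom S2 := by
      constructor
      · exact Set.mem_biUnion h1 ⟨hfDom, hf1⟩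
      · exact Set.mem_biUnion h2 ⟨hfDom, hf2⟩
    rw [h] at this
    exact this
  · intro h
    ext f
    simp only [Set.mem_inter_iff, Set.mem_empty_iff_false, iff_false]
    rintro ⟨hm1, hm2⟩
    simp only [omegaS, Set.mem_iUnion] at hm1 hm2
    obtain ⟨d1, h1, hD1⟩ := hm1
    obtain ⟨d2, h2, hD2⟩ := hm2
    obtain ⟨x, a, b, e1, e2, hab⟩ := h d1 h1 d2 h2
    exact hab ((hD1.2 x a e1) ▸ (hD2.2 x b e2) ▸ rfl)
end
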